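/- Fix an even integer m ≥ 2 and, for each even j with 2 ≤ j ≤ m−2, an odd integer δ_j ≥ 3. Let ι be the fixed-point-free involution of {1, …, m} given by ι := ∏_{k=1}^{m/2} swap (2k−1) (2k). Then for every integer c with 1 ≤ c ≤ m/2 there exists a constrained fishnet datum (n, t) such that the subgroup of the symmetric group on {1, …, m} generated by ι and σ(t)⁻¹ * ι * σ(t) has exactly c orbits on {1, …, m}. (These orbits are in bijection with the components of the plat closure of the fishnet braid, so this is the permutation-theoretic form of the statement that strong fishnets of width m in the constrained family achieve every component number k ∈ {1, …, m/2}.) -/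

import Mathlib

/-- The permutation of `{1, …, m}` (as `Fin m`, zero-indexed) which swaps the
strands in (one-indexed) positions `j` and `j+1`, i.e. the zero-indexed
positions `j-1` and `j`; it is the identity when `j` is out of range. -/
def adjSwap (m : ℕ) (j : ℕ) : Equiv.Perm (Fin m) :=
  if h : 1 ≤ j ∧ j < m then Equiv.swap ⟨j - 1, by omega⟩ ⟨j, h.2⟩ else 1

/-- The permutation `ρ_i` of `{1, …, m}` contributed by row `i` of a fishnet
braid with twist parameters `t`: the product over all columns `j` with
`1 ≤ j ≤ m-1` and `i + j` odd of `(swap j (j+1))^(t i j)`. -/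
def fishnetRowPerm (m : ℕ) (t : ℕ → ℕ → ℤ) (i : ℕ) : Equiv.Perm (Fin m) :=
  ((List.range m).map fun j => if Odd (i + j) then adjSwap m j ^ (t i j) else 1).prod

/-- The permutation `σ(t)` of `{1, …, m}` associated to a fishnet braid of
height `n` and width `m` with twist parameters `t`: the product
`ρ_1 * ρ_2 * ⋯ * ρ_n` of the row permutations, in increasing order of the
row index. -/
def fishnetPerm (m : ℕ) (n : ℕ) (t : ℕ → ℕ → ℤ) : Equiv.Perm (Fin m) :=
  ((List.range n).map fun i => fishnetRowPerm m t (i + 1)).prod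

/-- A *constrained fishnet datum* for width `m` and column constraints `δ`:
an odd positive integer `n` together with twist parameters `t i j`
(relevant for `1 ≤ i ≤ n`, `1 ≤ j ≤ m-1`, `i + j` odd) such that
`|t i j| ≥ 3` always (a strong fishnet) and `δ j ∣ t i j` for even `j`. -/
def IsConstrainedFishnetDatum (m : ℕ) (δ : ℕ → ℕ) (n : ℕ) (t : ℕ → ℕ → ℤ) : Prop :=
  Odd n ∧ 1 ≤ n ∧
    (∀ i j : ℕ, 1 ≤ i → i ≤ n → 1 ≤ j → j ≤ m - 1 → Odd (i + j) → 3 ≤ |t i j|) ∧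
    (∀ i j : ℕ, 1 ≤ i → i ≤ n → 1 ≤ j → j ≤ m - 1 → Odd (i + j) → Even j →
      (δ j : ℤ) ∣ t i j)

/-- The fixed-point-free involution `ι = ∏_{k=1}^{m/2} swap (2k-1) (2k)` of
`{1, …, m}`, pairing up the strands `(1,2), (3,4), …, (m-1, m)` (which are the
pairs joined by the plat closure at top and bottom). -/
def platInvolution (m : ℕ) : Equiv.Perm (Fin m) :=
  ((List.range (m / 2)).map fun k => adjSwap m (2 * k + 1)).prod

section FishnetAux

lemma listProd_fix {α : Type*} (l : List (Equiv.Perm α)) (x : α)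
    (h : ∀ g ∈ l, g x = x) : l.prod x = x := by
  induction l with
  | nil => simp
  | cons g l ih =>
      rw [List.prod_cons, Equiv.Perm.mul_apply,
        ih (fun g hg => h g (List.mem_cons_of_mem _ hg)), h g List.mem_cons_self]

lemma prod_range_map_apply {α : Type*} (f : ℕ → Equiv.Perm α) (N k : ℕ) (hk : k < N) (x : α)
    (h2 : ∀ j, k < j → j < N → f j x = x)
    (h1 : ∀ j, j < k → f j (f k x) = f k x) :
    ((List.range N).map f).prod x = f k x := by
  have hsplit : List.range N = List.range (k + 1) ++ (List.range (N - (k + 1))).map (k + 1 + ·) := by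
    rw [← List.range_add]; congr 1; omega
  rw [hsplit, List.map_append, List.prod_append, Equiv.Perm.mul_apply]
  rw [listProd_fix _ x (by
    intro g hg
    simp only [List.map_map, List.mem_map, List.mem_range] at hg
    obtain ⟨j, hj, rfl⟩ := hg
    exact h2 (k + 1 + j) (by omega) (by omega))]
  rw [List.range_succ, List.map_append, List.prod_append, Equiv.Perm.mul_apply]
  simp only [List.map_cons, List.map_nil, List.prod_cons, List.prod_nil, mul_one]
  exact listProd_fix _ _ (by
    intro g hg
    simp only [List.mem_map, List.mem_range] at hg
    obtain ⟨j, hj, rfl⟩ := hg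
    exact h1 j hj)

lemma invol_zpow {G : Type*} [Group G] {g : G} (h : g * g = 1) (n : ℤ) :
    g ^ n = if Even n then 1 else g := by
  have h2 : g ^ (2 : ℤ) = 1 := by rw [zpow_two]; exact h
  rcases Int.even_or_odd n with ⟨k, rfl⟩ | ⟨k, rfl⟩
  · rw [if_pos ⟨k, rfl⟩, show k + k = 2 * k by ring, zpow_mul, h2, one_zpow]
  · rw [if_neg (by simp [Int.even_add_one, parity_simps]), zpow_add, zpow_mul, h2, one_zpow,
      one_mul, zpow_one]

lemma adjSwap_mul_self (m j : ℕ) : adjSwap m j * adjSwap m j = 1 := by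
  unfold adjSwap
  split
  · exact Equiv.swap_mul_self _ _
  · exact mul_one 1

lemma adjSwap_apply_of_ne (m j : ℕ) (x : Fin m) (h1 : x.val ≠ j - 1) (h2 : x.val ≠ j) :
    adjSwap m j x = x := by
  unfold adjSwap
  split
  · exact Equiv.swap_apply_of_ne_of_ne (fun h => h1 (congrArg Fin.val h))
      (fun h => h2 (congrArg Fin.val h))
  · rfl

lemma adjSwap_apply_low (m j : ℕ) (hj : 1 ≤ j) (hjm : j < m) (x : Fin m) (hx : x.val = j - 1) :
    (adjSwap m j x).val = j := by
  unfold adjSwap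
  rw [dif_pos ⟨hj, hjm⟩]
  have hx' : x = ⟨j - 1, by omega⟩ := Fin.ext hx
  rw [hx', Equiv.swap_apply_left]

lemma adjSwap_apply_high (m j : ℕ) (hj : 1 ≤ j) (hjm : j < m) (x : Fin m) (hx : x.val = j) :
    (adjSwap m j x).val = j - 1 := by
  unfold adjSwap
  rw [dif_pos ⟨hj, hjm⟩]
  have hx' : x = ⟨j, hjm⟩ := Fin.ext hx
  rw [hx', Equiv.swap_apply_right]

lemma platInvolution_val (m : ℕ) (hm0 : m % 2 = 0) (x : Fin m) :
    (platInvolution m x).val = if x.val % 2 = 0 then x.val + 1 else x.val - 1 := by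
  have hx := x.isLt
  have hkm : x.val / 2 < m / 2 := by omega
  have h2 : ∀ j, x.val / 2 < j → j < m / 2 →
      (fun k => adjSwap m (2 * k + 1)) j x = x := by
    intro j hj1 hj2
    exact adjSwap_apply_of_ne m _ x (by omega) (by omega)
  rcases Nat.even_or_odd x.val with he | ho
  · have he' : x.val % 2 = 0 := Nat.even_iff.mp he
    have hswap : (adjSwap m (2 * (x.val / 2) + 1) x).val = 2 * (x.val / 2) + 1 :=
      adjSwap_apply_low m _ (by omega) (by omega) x (by omega)
    have h1 : ∀ j, j < x.val / 2 →
        adjSwap m (2 * j + 1) (adjSwap m (2 * (x.val / 2) + 1) x)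
          = adjSwap m (2 * (x.val / 2) + 1) x := by
      intro j hj
      exact adjSwap_apply_of_ne m _ _ (by omega) (by omega)
    rw [platInvolution,
      prod_range_map_apply (fun k => adjSwap m (2 * k + 1)) (m / 2) (x.val / 2) hkm x h2 h1,
      if_pos he']
    exact hswap.trans (by omega)
  · have ho' : x.val % 2 = 1 := Nat.odd_iff.mp ho
    have hswap : (adjSwap m (2 * (x.val / 2) + 1) x).val = 2 * (x.val / 2) :=
      (adjSwap_apply_high m _ (by omega) (by omega) x (by omega)).trans (by omega)
    have h1 : ∀ j, j < x.val / 2 →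
        adjSwap m (2 * j + 1) (adjSwap m (2 * (x.val / 2) + 1) x)
          = adjSwap m (2 * (x.val / 2) + 1) x := by
      intro j hj
      exact adjSwap_apply_of_ne m _ _ (by omega) (by omega)
    rw [platInvolution,
      prod_range_map_apply (fun k => adjSwap m (2 * k + 1)) (m / 2) (x.val / 2) hkm x h2 h1,
      if_neg (by omega)]
    exact hswap.trans (by omega)

end FishnetAux

/-- **Strong fishnets achieve every component number.** Fix an even `m ≥ 2`
and, for each even `j` with `2 ≤ j ≤ m-2`, an odd integer `δ j ≥ 3`.  Let `ι`
be the plat involution of `{1, …, m}`.  Then for every `c` with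
`1 ≤ c ≤ m/2` there is a constrained fishnet datum `(n, t)` such that the
subgroup generated by `ι` and `σ(t)⁻¹ * ι * σ(t)` has exactly `c` orbits on
`{1, …, m}` — equivalently, the plat closure of the fishnet braid `ζ_t` has
exactly `c` components. -/
theorem fishnet_component_number (m : ℕ) (hm : Even m) (hm2 : 2 ≤ m)
    (δ : ℕ → ℕ)
    (hδodd : ∀ j : ℕ, 2 ≤ j → j ≤ m - 2 → Even j → Odd (δ j))
    (hδ3 : ∀ j : ℕ, 2 ≤ j → j ≤ m - 2 → Even j → 3 ≤ δ j)
    (c : ℕ) (hc1 : 1 ≤ c) (hc2 : c ≤ m / 2) :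
    ∃ (n : ℕ) (t : ℕ → ℕ → ℤ), IsConstrainedFishnetDatum m δ n t ∧
      Nat.card (MulAction.orbitRel.Quotient
        (Subgroup.closure {platInvolution m,
          (fishnetPerm m n t)⁻¹ * platInvolution m * fishnetPerm m n t})
        (Fin m)) = c := by
  have hm0 : m % 2 = 0 := Nat.even_iff.mp hm
  have hcm : 2 * c ≤ m := by omega
  set a := m - 2 * c with ha_def
  have ha2 : a % 2 = 0 := by omega
  have ham : a + 2 ≤ m := by omega
  set t : ℕ → ℕ → ℤ := fun _ j => (δ j : ℤ) * (if j ≤ a then 1 else 2) with ht_def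
  refine ⟨1, t, ⟨odd_one, le_refl 1, ?_, ?_⟩, ?_⟩
  · -- strength
    intro i j hi1 hin h1j hjm hodd
    have hj2 : j % 2 = 0 := by
      obtain ⟨r, hr⟩ := hodd
      omega
    have h3 : 3 ≤ δ j := hδ3 j (by omega) (by omega) (Nat.even_iff.mpr hj2)
    have h3' : (3 : ℤ) ≤ (δ j : ℤ) := by exact_mod_cast h3
    show 3 ≤ |(δ j : ℤ) * (if j ≤ a then 1 else 2)|
    split
    · rw [mul_one, abs_of_nonneg (by positivity)]
      exact h3'
    · rw [abs_of_nonneg (by positivity)]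
      nlinarith
  · -- divisibility
    intro i j _ _ _ _ _ _
    exact dvd_mul_right _ _
  -- the component count
  have hrow : fishnetPerm m 1 t = fishnetRowPerm m t 1 := by
    simp [fishnetPerm, List.range_succ]
  have facEval1 : ∀ j, j % 2 = 0 → 2 ≤ j → j ≤ a →
      (if Odd (1 + j) then adjSwap m j ^ (t 1 j) else 1) = adjSwap m j := by
    intro j hj0 hj2 hja
    have hodd : Odd (δ j) := hδodd j hj2 (by omega) (Nat.even_iff.mpr hj0)
    rw [if_pos (by rw [Nat.odd_iff]; omega)]
    have ht1 : t 1 j = (δ j : ℤ) := by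
      rw [ht_def]
      simp [hja]
    rw [ht1, invol_zpow (adjSwap_mul_self m j), if_neg (by
      rw [Int.even_coe_nat]
      exact (Nat.not_even_iff_odd.mpr hodd))]
  have facEval0 : ∀ j, ¬(j % 2 = 0 ∧ 2 ≤ j ∧ j ≤ a) →
      (if Odd (1 + j) then adjSwap m j ^ (t 1 j) else 1) = 1 := by
    intro j hj
    by_cases h0 : j % 2 = 0
    · rw [if_pos (by rw [Nat.odd_iff]; omega)]
      by_cases h1 : j = 0
      · subst h1
        have hz : adjSwap m 0 = 1 := by
          unfold adjSwap
          rw [dif_neg (by omega)]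
        rw [hz, one_zpow]
      · have hja : ¬ j ≤ a := fun h => hj ⟨h0, by omega, h⟩
        have ht1 : t 1 j = (δ j : ℤ) * 2 := by
          rw [ht_def]
          simp [hja]
        rw [ht1, invol_zpow (adjSwap_mul_self m j), if_pos ⟨(δ j : ℤ), by ring⟩]
    · rw [if_neg (by rw [Nat.odd_iff]; omega)]
  have σval : ∀ x : Fin m, (fishnetPerm m 1 t x).val =
      if 1 ≤ x.val ∧ x.val ≤ a then (if x.val % 2 = 0 then x.val - 1 else x.val + 1)
      else x.val := by
    intro x
    have hx := x.isLt
    rw [hrow]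
    unfold fishnetRowPerm
    by_cases hc : 1 ≤ x.val ∧ x.val ≤ a
    · rcases Nat.even_or_odd x.val with he | ho
      · -- x even in [2, a] : moved by factor k = x.val
        have he' : x.val % 2 = 0 := Nat.even_iff.mp he
        have hk2 : 2 ≤ x.val := by omega
        have hfk : ((if Odd (1 + x.val) then adjSwap m x.val ^ (t 1 x.val) else 1) x).val
            = x.val - 1 := by
          rw [facEval1 x.val he' hk2 hc.2]
          exact adjSwap_apply_high m x.val (by omega) (by omega) x rfl
        have h2 : ∀ j, x.val < j → j < m →
            (if Odd (1 + j) then adjSwap m j ^ (t 1 j) else 1) x = x := by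
          intro j hj1 hj2
          by_cases hcj : j % 2 = 0 ∧ 2 ≤ j ∧ j ≤ a
          · rw [facEval1 j hcj.1 hcj.2.1 hcj.2.2]
            exact adjSwap_apply_of_ne m j x (by omega) (by omega)
          · rw [facEval0 j hcj]
            rfl
        have h1 : ∀ j, j < x.val →
            (if Odd (1 + j) then adjSwap m j ^ (t 1 j) else 1)
              ((if Odd (1 + x.val) then adjSwap m x.val ^ (t 1 x.val) else 1) x)
            = (if Odd (1 + x.val) then adjSwap m x.val ^ (t 1 x.val) else 1) x := by
          intro j hj
          by_cases hcj : j % 2 = 0 ∧ 2 ≤ j ∧ j ≤ a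
          · rw [facEval1 j hcj.1 hcj.2.1 hcj.2.2]
            exact adjSwap_apply_of_ne m j _ (by omega) (by omega)
          · rw [facEval0 j hcj]
            rfl
        rw [prod_range_map_apply (fun j => if Odd (1 + j) then adjSwap m j ^ (t 1 j) else 1)
          m x.val (by omega) x h2 h1, if_pos hc, if_pos he']
        exact hfk
      · -- x odd in [1, a-1] : moved by factor k = x.val + 1
        have ho' : x.val % 2 = 1 := Nat.odd_iff.mp ho
        have hklea : x.val + 1 ≤ a := by omega
        have hfk : ((if Odd (1 + (x.val + 1)) then adjSwap m (x.val + 1) ^ (t 1 (x.val + 1))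
            else 1) x).val = x.val + 1 := by
          rw [facEval1 (x.val + 1) (by omega) (by omega) hklea]
          exact adjSwap_apply_low m (x.val + 1) (by omega) (by omega) x (by omega)
        have h2 : ∀ j, x.val + 1 < j → j < m →
            (if Odd (1 + j) then adjSwap m j ^ (t 1 j) else 1) x = x := by
          intro j hj1 hj2
          by_cases hcj : j % 2 = 0 ∧ 2 ≤ j ∧ j ≤ a
          · rw [facEval1 j hcj.1 hcj.2.1 hcj.2.2]
            exact adjSwap_apply_of_ne m j x (by omega) (by omega)
          · rw [facEval0 j hcj]
            rfl
        have h1 : ∀ j, j < x.val + 1 →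
            (if Odd (1 + j) then adjSwap m j ^ (t 1 j) else 1)
              ((if Odd (1 + (x.val + 1)) then adjSwap m (x.val + 1) ^ (t 1 (x.val + 1)) else 1) x)
            = (if Odd (1 + (x.val + 1)) then adjSwap m (x.val + 1) ^ (t 1 (x.val + 1)) else 1)
                x := by
          intro j hj
          by_cases hcj : j % 2 = 0 ∧ 2 ≤ j ∧ j ≤ a
          · rw [facEval1 j hcj.1 hcj.2.1 hcj.2.2]
            refine adjSwap_apply_of_ne m j _ ?_ ?_
            · have hje : j % 2 = 0 := hcj.1
              omega
            · omega
          · rw [facEval0 j hcj]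
            rfl
        have hne : ¬(x.val % 2 = 0) := by omega
        rw [prod_range_map_apply (fun j => if Odd (1 + j) then adjSwap m j ^ (t 1 j) else 1)
          m (x.val + 1) (by omega) x h2 h1, hfk, if_pos hc, if_neg hne]
    · -- x fixed
      rw [if_neg hc]
      have hfix : ((List.range m).map
          fun j => if Odd (1 + j) then adjSwap m j ^ (t 1 j) else 1).prod x = x := by
        apply listProd_fix
        intro g hg
        simp only [List.mem_map, List.mem_range] at hg
        obtain ⟨j, hj, rfl⟩ := hg
        by_cases hcj : j % 2 = 0 ∧ 2 ≤ j ∧ j ≤ a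
        · rw [facEval1 j hcj.1 hcj.2.1 hcj.2.2]
          exact adjSwap_apply_of_ne m j x (by omega) (by omega)
        · rw [facEval0 j hcj]
          rfl
      rw [hfix]
  -- σ is an involution
  have hσσ : fishnetPerm m 1 t * fishnetPerm m 1 t = 1 := by
    apply Equiv.ext
    intro x
    have hx := x.isLt
    have h1 := σval x
    have h2 := σval (fishnetPerm m 1 t x)
    rw [Equiv.Perm.mul_apply, Equiv.Perm.one_apply]
    apply Fin.ext
    split_ifs at h1 h2 <;> omega
  have hσinv : (fishnetPerm m 1 t)⁻¹ = fishnetPerm m 1 t := inv_eq_of_mul_eq_one_right hσσ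
  have happ : ∀ x : Fin m,
      ((fishnetPerm m 1 t)⁻¹ * platInvolution m * fishnetPerm m 1 t) x
        = fishnetPerm m 1 t (platInvolution m (fishnetPerm m 1 t x)) := by
    intro x
    rw [hσinv]
    rfl
  set H := Subgroup.closure {platInvolution m,
      (fishnetPerm m 1 t)⁻¹ * platInvolution m * fishnetPerm m 1 t} with hH_def
  have hιH : platInvolution m ∈ H := Subgroup.subset_closure (Set.mem_insert _ _)
  have hτH : (fishnetPerm m 1 t)⁻¹ * platInvolution m * fishnetPerm m 1 t ∈ H :=
    Subgroup.subset_closure (Set.mem_insert_of_mem _ rfl)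
  -- the invariant
  have hfι : ∀ x : Fin m, ((platInvolution m x).val - a) / 2 = (x.val - a) / 2 := by
    intro x
    have hx := x.isLt
    have h := platInvolution_val m hm0 x
    split_ifs at h <;> omega
  have hfσ : ∀ x : Fin m, ((fishnetPerm m 1 t x).val - a) / 2 = (x.val - a) / 2 := by
    intro x
    have hx := x.isLt
    have h := σval x
    split_ifs at h <;> omega
  have hfτ : ∀ x : Fin m,
      ((((fishnetPerm m 1 t)⁻¹ * platInvolution m * fishnetPerm m 1 t) x).val - a) / 2
        = (x.val - a) / 2 := by
    intro x
    rw [happ x]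
    exact (hfσ _).trans ((hfι _).trans (hfσ x))
  have keyH : ∀ g : Equiv.Perm (Fin m), g ∈ H →
      ∀ x : Fin m, ((g x).val - a) / 2 = (x.val - a) / 2 := by
    intro g hg
    refine Subgroup.closure_induction ?_ ?_ ?_ ?_ hg
    · intro g hgs x
      simp only [Set.mem_insert_iff, Set.mem_singleton_iff] at hgs
      rcases hgs with rfl | rfl
      · exact hfι x
      · exact hfτ x
    · intro x
      rfl
    · intro g h _ _ ihg ihh x
      rw [Equiv.Perm.mul_apply]
      exact (ihg (h x)).trans (ihh x)
    · intro g _ ihg x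
      have h := ihg (g⁻¹ x)
      rw [show g (g⁻¹ x) = x from Equiv.apply_symm_apply g x] at h
      exact h.symm
  have keyRel : ∀ x y : Fin m, (MulAction.orbitRel H (Fin m)).r x y →
      (x.val - a) / 2 = (y.val - a) / 2 := by
    intro x y h
    obtain ⟨g, hgy⟩ := h
    rw [← hgy]
    exact keyH g.1 g.2 y
  have hstep : ∀ g : Equiv.Perm (Fin m), g ∈ H → ∀ x : Fin m,
      (Quotient.mk'' (g x) : MulAction.orbitRel.Quotient H (Fin m)) = Quotient.mk'' x := by
    intro g hg x
    exact Quotient.sound' ⟨⟨g, hg⟩, rfl⟩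
  -- descent within the big block
  have τval_lt : ∀ x : Fin m, x.val % 2 = 0 → 2 ≤ x.val → x.val ≤ a →
      (((fishnetPerm m 1 t)⁻¹ * platInvolution m * fishnetPerm m 1 t) x).val < x.val := by
    intro x h0 h2 hxa
    rw [happ x]
    have e1 := σval x
    rw [if_pos ⟨by omega, hxa⟩, if_pos h0] at e1
    have e2 := platInvolution_val m hm0 (fishnetPerm m 1 t x)
    rw [e1, if_neg (by omega)] at e2
    have e3 := σval (platInvolution m (fishnetPerm m 1 t x))
    rw [e2] at e3
    split_ifs at e3 <;> omega
  have conn0 : ∀ v : ℕ, ∀ x : Fin m, x.val = v → x.val ≤ a + 1 →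
      (Quotient.mk'' x : MulAction.orbitRel.Quotient H (Fin m))
        = Quotient.mk'' (⟨0, by omega⟩ : Fin m) := by
    intro v
    induction v using Nat.strong_induction_on with
    | _ v ih =>
      intro x hxv hxa
      rcases Nat.eq_zero_or_pos v with h0 | hpos
      · have hx0 : x = (⟨0, by omega⟩ : Fin m) := by
          apply Fin.ext
          show x.val = 0
          omega
        rw [hx0]
      · rcases Nat.even_or_odd v with he | ho
        · have he' : x.val % 2 = 0 := by
            have := Nat.even_iff.mp he
            omega
          have hva : x.val ≤ a := by omega
          have hlt := τval_lt x he' (by omega) hva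
          rw [← hstep _ hτH x]
          exact ih _ (by omega) _ rfl (by omega)
        · have ho' : x.val % 2 = 1 := by
            have := Nat.odd_iff.mp ho
            omega
          have hιx := platInvolution_val m hm0 x
          rw [if_neg (by omega)] at hιx
          rw [← hstep _ hιH x]
          exact ih (v - 1) (by omega) _ (by omega) (by omega)
  have hrep : ∀ d : Fin c, a + 2 * d.val < m := by
    intro d
    have := d.isLt
    omega
  have h0m : 0 < m := by omega
  let e : MulAction.orbitRel.Quotient H (Fin m) ≃ Fin c :=
    { toFun := Quotient.lift
        (fun x : Fin m => (⟨(x.val - a) / 2, by have := x.isLt; omega⟩ : Fin c))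
        (fun x y h => Fin.ext (keyRel x y h))
      invFun := fun d => Quotient.mk'' (⟨a + 2 * d.val, hrep d⟩ : Fin m)
      left_inv := by
        intro q
        induction q using Quotient.inductionOn' with
        | h x =>
          have hx := x.isLt
          show Quotient.mk'' (⟨a + 2 * ((x.val - a) / 2), _⟩ : Fin m) = Quotient.mk'' x
          rcases le_or_gt x.val (a + 1) with hle | hgt
          · have h1 := conn0 (a + 2 * ((x.val - a) / 2))
              (⟨a + 2 * ((x.val - a) / 2), hrep ⟨(x.val - a) / 2, by omega⟩⟩ : Fin m) rfl
              (by simp only []; omega)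
            have h2 := conn0 x.val x rfl hle
            rw [h1, h2]
          · rcases Nat.even_or_odd (x.val - a) with he | ho
            · have hx' : (⟨a + 2 * ((x.val - a) / 2), hrep ⟨(x.val - a) / 2, by omega⟩⟩ : Fin m)
                  = x := by
                apply Fin.ext
                have := Nat.even_iff.mp he
                simp only []
                omega
              rw [hx']
            · have ho' : x.val % 2 = 1 := by
                have := Nat.odd_iff.mp ho
                omega
              have hιx := platInvolution_val m hm0 x
              rw [if_neg (by omega)] at hιx
              have hx' : (⟨a + 2 * ((x.val - a) / 2), hrep ⟨(x.val - a) / 2, by omega⟩⟩ : Fin m)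
                  = platInvolution m x := by
                apply Fin.ext
                simp only []
                omega
              rw [hx', hstep _ hιH x]
      right_inv := by
        intro d
        apply Fin.ext
        show ((a + 2 * d.val) - a) / 2 = d.val
        omega }
  rw [Nat.card_congr e, Nat.card_eq_fintype_card, Fintype.card_fin]
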